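/- arXiv:1310.1442 — 8 statements merged into one kernel-verified Lean document; each statement's English description precedes it below -/
import Mathlib

section
/- For every positive integer t ≥ 1, gcd(2^(2t+1) - 1, 2^t + 3) = 1. -/
/-!
With `x = 2 ^ t` we have `2 ^ (2t+1) - 1 = 2x² - 1`, and
`17 = (2x² - 1) + 12(x + 3) - 2(x + 3)²`, so a common prime divisor can only be `17`.
But `2` has order `8` modulo `17`, so `2 ^ (2t+1) ≢ 1 (mod 17)` because `2t + 1` is odd.
-/

theorem dvd_seventeen_of_dvd_two_mul_sq_sub_one_of_dvd_add_three {R : Type*} [CommRing R]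
    {d x : R} (h₁ : d ∣ 2 * x ^ 2 - 1) (h₂ : d ∣ x + 3) : d ∣ 17 := by
  have key : (17 : R) = (2 * x ^ 2 - 1) + 12 * (x + 3) - 2 * (x + 3) ^ 2 := by ring
  rw [key]
  exact dvd_sub (dvd_add h₁ (h₂.mul_left 12)) ((dvd_pow h₂ two_ne_zero).mul_left 2)

theorem ZMod.orderOf_two_seventeen : orderOf (2 : ZMod 17) = 8 :=
  haveI : Fact (Nat.Prime 2) := ⟨Nat.prime_two⟩
  orderOf_eq_prime_pow (p := 2) (n := 2) (by decide) (by decide)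

theorem ZMod.two_pow_odd_ne_one_seventeen {n : ℕ} (hn : Odd n) : (2 : ZMod 17) ^ n ≠ 1 := by
  rw [Ne, ← orderOf_dvd_iff_pow_eq_one, ZMod.orderOf_two_seventeen]
  obtain ⟨k, rfl⟩ := hn
  omega

theorem not_seventeen_dvd_two_pow_odd_sub_one {n : ℕ} (hn : Odd n) : ¬ 17 ∣ 2 ^ n - 1 := by
  rw [← ZMod.natCast_eq_zero_iff, Nat.cast_sub Nat.one_le_two_pow, sub_eq_zero]
  push_cast
  exact ZMod.two_pow_odd_ne_one_seventeen hn

theorem gcd_two_pow_odd_general (t : ℕ) :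
    Nat.gcd (2 ^ (2 * t + 1) - 1) (2 ^ t + 3) = 1 := by
  refine Nat.coprime_of_dvd fun p hp h₁ h₂ => ?_
  have h₁' : (p : ℤ) ∣ 2 * ((2 : ℤ) ^ t) ^ 2 - 1 := by
    have := Int.natCast_dvd_natCast.mpr h₁
    push_cast [Nat.cast_sub Nat.one_le_two_pow] at this
    convert this using 2
    ring
  have h₂' : (p : ℤ) ∣ (2 : ℤ) ^ t + 3 := by exact_mod_cast h₂
  have hp17 : p = 17 := (Nat.prime_dvd_prime_iff_eq hp (by norm_num)).mp <| by
    exact_mod_cast dvd_seventeen_of_dvd_two_mul_sq_sub_one_of_dvd_add_three h₁' h₂'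
  subst hp17
  exact not_seventeen_dvd_two_pow_odd_sub_one (odd_two_mul_add_one t) h₁

theorem gcd_two_pow_odd (t : ℕ) (ht : 1 ≤ t) :
    Nat.gcd (2 ^ (2 * t + 1) - 1) (2 ^ t + 3) = 1 :=
  gcd_two_pow_odd_general t
end

section
/- Let m ≥ 2, n = 2^m - 1, and h an integer with 1 ≤ h ≤ ⌈(m+1)/2⌉. For every odd integer j with 1 ≤ j ≤ 2^h - 1, the size of the 2-cyclotomic coset of j modulo n equals m, unless m is even and j = 2^(m/2) + 1, in which case the size equals m/2. -/
/-!
The coset size of `j` is the period `p` of `j` under multiplication by `2` in `ZMod (2 ^ m - 1)`,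
so `p ∣ m` and `2 ^ m - 1 ∣ (2 ^ p - 1) * j`. If `3 * p ≤ m`, then `p + h ≤ m` and
`0 < (2 ^ p - 1) * j < 2 ^ (p + h) - 1 ≤ 2 ^ m - 1`, which is impossible. If `m = 2 * p`, then
`2 ^ m - 1 = (2 ^ p - 1) * (2 ^ p + 1)`, so `2 ^ p + 1 ∣ j < 2 * (2 ^ p + 1)` and `j = 2 ^ p + 1`.
-/

open Function MulAction

theorem MulAction.period_eq_sInf {M α : Type*} [Monoid M] [MulAction M α] (g : M) (x : α) :
    period g x = sInf {ℓ : ℕ | 0 < ℓ ∧ g ^ ℓ • x = x} := by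
  simp only [period_eq_minimalPeriod, minimalPeriod_eq_sInf_n_pos_IsPeriodicPt,
    isPeriodicPt_smul_iff, gt_iff_lt]

theorem ZMod.natCast_pow_smul_eq_iff_modEq (n a ℓ j : ℕ) :
    (a : ZMod n) ^ ℓ • (j : ZMod n) = j ↔ a ^ ℓ * j ≡ j [MOD n] := by
  rw [← ZMod.natCast_eq_natCast_iff, smul_eq_mul]
  push_cast
  rfl

theorem Nat.mul_modEq_self_iff_dvd {n a j : ℕ} (ha : 1 ≤ a) :
    a * j ≡ j [MOD n] ↔ n ∣ (a - 1) * j := by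
  rw [Nat.ModEq.comm, Nat.modEq_iff_dvd' (Nat.le_mul_of_pos_left j ha), Nat.sub_one_mul]

theorem ZMod.period_natCast_dvd_iff {n a : ℕ} (ha : a ≠ 0) (j ℓ : ℕ) :
    period (a : ZMod n) (j : ZMod n) ∣ ℓ ↔ n ∣ (a ^ ℓ - 1) * j := by
  rw [← pow_smul_eq_iff_period_dvd, ZMod.natCast_pow_smul_eq_iff_modEq,
    Nat.mul_modEq_self_iff_dvd (Nat.one_le_pow _ _ (Nat.pos_of_ne_zero ha))]

theorem Nat.eq_or_eq_two_mul_or_three_mul_le_of_dvd {p m : ℕ} (h : p ∣ m) (hm : 0 < m) :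
    p = m ∨ m = 2 * p ∨ 3 * p ≤ m := by
  obtain ⟨q, rfl⟩ := h
  rcases q with _ | _ | _ | q
  · simp at hm
  · simp
  · simp [mul_comm]
  · right; right; nlinarith

theorem Nat.pow_two_mul_sub_one (a k : ℕ) : a ^ (2 * k) - 1 = (a ^ k - 1) * (a ^ k + 1) := by
  rw [pow_mul', ← one_pow 2, Nat.sq_sub_sq, mul_comm, one_pow]

theorem Nat.pow_sub_one_mul_lt {a p h m j : ℕ} (ha : 2 ≤ a) (hp : 0 < p) (hphm : p + h ≤ m)
    (hj : j ≤ a ^ h - 1) : (a ^ p - 1) * j < a ^ m - 1 := by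
  have hap : 2 ≤ a ^ p := le_trans ha (Nat.le_self_pow hp.ne' a)
  have hah : 1 ≤ a ^ h := Nat.one_le_pow _ _ (by omega)
  have hm : a ^ p * a ^ h ≤ a ^ m := pow_add a p h ▸ Nat.pow_le_pow_right (by omega) hphm
  calc (a ^ p - 1) * j ≤ (a ^ p - 1) * (a ^ h - 1) := Nat.mul_le_mul_left _ hj
    _ < a ^ p * a ^ h - 1 := by
      have hprod : 1 ≤ a ^ p * a ^ h := le_trans (by norm_num) (Nat.mul_le_mul hap hah)
      zify [hah, hprod, hap.trans' one_le_two]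
      nlinarith
    _ ≤ a ^ m - 1 := Nat.sub_le_sub_right hm 1

theorem Nat.eq_pow_add_one_of_dvd {a k j : ℕ} (hak : 2 ≤ a ^ k) (hj : j ≠ 0)
    (hjk : j < 2 * (a ^ k + 1)) (hdvd : a ^ (2 * k) - 1 ∣ (a ^ k - 1) * j) : j = a ^ k + 1 := by
  rw [Nat.pow_two_mul_sub_one, Nat.mul_dvd_mul_iff_left (by omega)] at hdvd
  exact Nat.eq_of_dvd_of_lt_two_mul hj hdvd hjk

theorem coset_size_of_small_odd_general (m h : ℕ) (hm : 2 ≤ m)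
    (hh2 : h ≤ (m + 2) / 2) (j : ℕ)
    (hj1 : 1 ≤ j) (hj2 : j ≤ 2 ^ h - 1) :
    (¬ (Even m ∧ j = 2 ^ (m / 2) + 1) →
      sInf {ℓ : ℕ | 0 < ℓ ∧ 2 ^ ℓ * j ≡ j [MOD 2 ^ m - 1]} = m) ∧
    ((Even m ∧ j = 2 ^ (m / 2) + 1) →
      sInf {ℓ : ℕ | 0 < ℓ ∧ 2 ^ ℓ * j ≡ j [MOD 2 ^ m - 1]} = m / 2) := by
  set p := period (2 : ZMod (2 ^ m - 1)) (j : ZMod (2 ^ m - 1))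
  have hsize : sInf {ℓ : ℕ | 0 < ℓ ∧ 2 ^ ℓ * j ≡ j [MOD 2 ^ m - 1]} = p := by
    simp only [p, period_eq_sInf]
    congr! 4 with ℓ
    rw [← ZMod.natCast_pow_smul_eq_iff_modEq, Nat.cast_ofNat]
  have hperiod := ZMod.period_natCast_dvd_iff (n := 2 ^ m - 1) two_ne_zero j
  have hpm : p ∣ m := (hperiod m).2 (dvd_mul_right _ _)
  have hp : 0 < p := Nat.pos_of_dvd_of_pos hpm (by omega)
  have hdvd : 2 ^ m - 1 ∣ (2 ^ p - 1) * j := (hperiod p).1 dvd_rfl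
  have hnot3 : ¬ 3 * p ≤ m := fun h3 =>
    Nat.not_dvd_of_pos_of_lt (Nat.mul_pos (Nat.sub_pos_of_lt (Nat.one_lt_two_pow hp.ne')) hj1)
      (Nat.pow_sub_one_mul_lt le_rfl hp (by omega) hj2) hdvd
  have hhalf : m = 2 * p → j = 2 ^ p + 1 := fun h2p => by
    refine Nat.eq_pow_add_one_of_dvd (Nat.le_self_pow hp.ne' 2) (by omega) ?_ ?_
    · have : 2 ^ h ≤ 2 ^ (p + 1) := Nat.pow_le_pow_right two_pos (by omega)
      rw [pow_succ] at this
      omega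
    · exact h2p ▸ hdvd
  rw [hsize]
  refine ⟨fun hexc => ?_, fun ⟨hm2, hj⟩ => ?_⟩
  · rcases Nat.eq_or_eq_two_mul_or_three_mul_le_of_dvd hpm (by omega) with h1 | h2 | h3
    · exact h1
    · exact absurd ⟨⟨p, by omega⟩, by rw [hhalf h2, h2]; simp⟩ hexc
    · exact absurd h3 hnot3
  · have hp_dvd_half : p ∣ m / 2 := (hperiod _).2 <| by
      rw [hj, ← Nat.pow_two_mul_sub_one, Nat.two_mul_div_two_of_even hm2]
    have := Nat.le_of_dvd (by omega) hp_dvd_half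
    rcases Nat.eq_or_eq_two_mul_or_three_mul_le_of_dvd hpm (by omega) with h1 | h2 | h3 <;> omega

theorem coset_size_of_small_odd (m h : ℕ) (hm : 2 ≤ m)
    (hh1 : 1 ≤ h) (hh2 : h ≤ (m + 2) / 2) (j : ℕ)
    (hodd : Odd j) (hj1 : 1 ≤ j) (hj2 : j ≤ 2 ^ h - 1) :
    (¬ (Even m ∧ j = 2 ^ (m / 2) + 1) →
      sInf {ℓ : ℕ | 0 < ℓ ∧ 2 ^ ℓ * j ≡ j [MOD 2 ^ m - 1]} = m) ∧
    ((Even m ∧ j = 2 ^ (m / 2) + 1) →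
      sInf {ℓ : ℕ | 0 < ℓ ∧ 2 ^ ℓ * j ≡ j [MOD 2 ^ m - 1]} = m / 2) :=
  coset_size_of_small_odd_general m h hm hh2 j hj1 hj2
end

section
/- Let m = 4h + 1 with h ≥ 1, and n = 2^m - 1. For every j of the form j = i + 2^(2h) with 0 ≤ i ≤ 2^h - 1, the 2-cyclotomic coset of j modulo n has size exactly m. -/
private lemma coset_mul {n j a : ℕ} (ha : 2 ^ a * j ≡ j [MOD n]) (k : ℕ) :
    2 ^ (k * a) * j ≡ j [MOD n] := by
  induction k with
  | zero => simp [Nat.ModEq.refl]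
  | succ k ih =>
    have hE : 2 ^ ((k + 1) * a) * j = 2 ^ (k * a) * (2 ^ a * j) := by ring
    rw [hE]
    calc 2 ^ (k * a) * (2 ^ a * j) ≡ 2 ^ (k * a) * j [MOD n] := ha.mul_left _
      _ ≡ j [MOD n] := ih

private lemma coset_sub {n j a b : ℕ} (hab : a ≤ b) (ha : 2 ^ a * j ≡ j [MOD n])
    (hb : 2 ^ b * j ≡ j [MOD n]) : 2 ^ (b - a) * j ≡ j [MOD n] := by
  have key : 2 ^ (b - a) * (2 ^ a * j) ≡ 2 ^ (b - a) * j [MOD n] := ha.mul_left _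
  have hE : 2 ^ (b - a) * (2 ^ a * j) = 2 ^ b * j := by
    rw [← mul_assoc, ← pow_add, Nat.sub_add_cancel hab]
  rw [hE] at key
  exact key.symm.trans hb

private lemma coset_gcd {n j : ℕ} :
    ∀ a b : ℕ, 2 ^ a * j ≡ j [MOD n] → 2 ^ b * j ≡ j [MOD n] →
      2 ^ (Nat.gcd a b) * j ≡ j [MOD n] := by
  intro a b
  induction a, b using Nat.gcd.induction with
  | H0 b => intro _ hb; simpa using hb
  | H1 a b ha ih =>
    intro h1 h2
    rw [Nat.gcd_rec]
    apply ih _ h1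
    have hmul : 2 ^ (b / a * a) * j ≡ j [MOD n] := coset_mul h1 _
    have hle : b / a * a ≤ b := Nat.div_mul_le_self b a
    have hsub := coset_sub hle hmul h2
    have hdm := Nat.div_add_mod b a
    have hmeq : b % a = b - b / a * a := by
      have hcomm : b / a * a = a * (b / a) := mul_comm _ _
      omega
    rwa [hmeq]

theorem coset_size_full_B (h : ℕ) (hh : 1 ≤ h) (i : ℕ) (hi : i ≤ 2 ^ h - 1) :
    sInf {ℓ : ℕ | 0 < ℓ ∧
        2 ^ ℓ * (i + 2 ^ (2 * h)) ≡ i + 2 ^ (2 * h) [MOD 2 ^ (4 * h + 1) - 1]} =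
      4 * h + 1 := by
  set m := 4 * h + 1 with hm
  set n := 2 ^ m - 1 with hn
  set j := i + 2 ^ (2 * h) with hj
  have h2h : (2:ℕ) ≤ 2 ^ h := by
    calc (2:ℕ) = 2 ^ 1 := (pow_one 2).symm
    _ ≤ 2 ^ h := Nat.pow_le_pow_right (by norm_num) hh
  have hjpos : 0 < j := by positivity
  -- m is in the set
  have hmmem : (m : ℕ) ∈ {ℓ : ℕ | 0 < ℓ ∧ 2 ^ ℓ * j ≡ j [MOD n]} := by
    refine ⟨by omega, ?_⟩
    have h1 : (2:ℕ) ^ m ≡ 1 [MOD n] := by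
      have hd : n ∣ 2 ^ m - 1 := dvd_refl _
      exact ((Nat.modEq_iff_dvd' (Nat.one_le_two_pow)).mpr hd).symm
    simpa using h1.mul_right j
  -- every element of the set is ≥ m
  have hlb : ∀ ℓ ∈ {ℓ : ℕ | 0 < ℓ ∧ 2 ^ ℓ * j ≡ j [MOD n]}, m ≤ ℓ := by
    rintro ℓ ⟨hℓpos, hℓ⟩
    by_contra hlt
    push_neg at hlt
    set d := Nat.gcd ℓ m with hd
    have hdmem : 2 ^ d * j ≡ j [MOD n] := coset_gcd ℓ m hℓ hmmem.2
    have hdpos : 0 < d := Nat.gcd_pos_of_pos_left m hℓpos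
    have hddvd : d ∣ m := Nat.gcd_dvd_right ℓ m
    have hdlt : d < m := lt_of_le_of_lt (Nat.gcd_le_left m hℓpos) hlt
    -- since m is odd and d is a proper divisor, 3 * d ≤ m
    have h3d : 3 * d ≤ m := by
      obtain ⟨k, hk⟩ := hddvd
      have hodd : Odd m := ⟨2 * h, by omega⟩
      rw [hk] at hodd
      have hkodd : Odd k := (Nat.odd_mul.mp hodd).2
      obtain ⟨t, ht⟩ := hkodd
      have hk1 : k ≠ 1 := by rintro rfl; omega
      have hk3 : 3 ≤ k := by omega
      calc 3 * d ≤ k * d := Nat.mul_le_mul_right d hk3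
        _ = m := by rw [hk, mul_comm]
    have hd2h : d ≤ 2 * h := by omega
    -- n divides 2^d * j - j, which is positive and < n : contradiction
    have hjle2 : j ≤ 2 ^ d * j := Nat.le_mul_of_pos_left j (by positivity)
    have hdvd : n ∣ 2 ^ d * j - j :=
      (Nat.modEq_iff_dvd' hjle2).mp hdmem.symm
    have hNpos : 0 < 2 ^ d * j - j := by
      have h2d : (2:ℕ) ≤ 2 ^ d := by
        calc (2:ℕ) = 2 ^ 1 := (pow_one 2).symm
        _ ≤ 2 ^ d := Nat.pow_le_pow_right (by norm_num) hdpos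
      have : 2 * j ≤ 2 ^ d * j := Nat.mul_le_mul_right j h2d
      omega
    have hNlt : 2 ^ d * j - j < n := by
      have hjle : j ≤ 2 ^ (2 * h) + 2 ^ h - 1 := by omega
      have hdle : (2:ℕ) ^ d ≤ 2 ^ (2 * h) := Nat.pow_le_pow_right (by norm_num) hd2h
      have key : 2 ^ d * j ≤ 2 ^ (2 * h) * (2 ^ (2 * h) + 2 ^ h - 1) :=
        Nat.mul_le_mul hdle (by omega)
      have hfin : 2 ^ (2 * h) * (2 ^ (2 * h) + 2 ^ h - 1) ≤ 2 ^ m - 1 := by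
        have e1 : (1:ℕ) ≤ 2 ^ (2 * h) + 2 ^ h := le_trans Nat.one_le_two_pow (Nat.le_add_right _ _)
        have e2 : (1:ℕ) ≤ 2 ^ m := Nat.one_le_two_pow
        zify [e1, e2]
        have hy : (2:ℤ) ≤ 2 ^ h := by exact_mod_cast h2h
        have hA : (2:ℤ) ^ (2 * h) = 2 ^ h * 2 ^ h := by
          rw [← pow_add]; ring_nf
        have hM : (2:ℤ) ^ m = 2 * (2 ^ h * 2 ^ h * (2 ^ h * 2 ^ h)) := by
          rw [hm, ← pow_add, ← pow_add, ← pow_succ']; ring_nf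
        rw [hA, hM]
        nlinarith [hy, mul_le_mul_of_nonneg_right hy
          (show (0:ℤ) ≤ 2 ^ h * 2 ^ h * 2 ^ h by positivity),
          mul_le_mul_of_nonneg_right hy (show (0:ℤ) ≤ 2 ^ h * 2 ^ h by positivity)]
      omega
    have hge := Nat.le_of_dvd hNpos hdvd
    omega
  -- conclude
  have hne : ({ℓ : ℕ | 0 < ℓ ∧ 2 ^ ℓ * j ≡ j [MOD n]}).Nonempty := ⟨m, hmmem⟩
  exact le_antisymm (Nat.sInf_le hmmem) (le_csInf hne hlb)
end

section
/- Let m = 4h + 1 with h ≥ 1, and n = 2^m - 1. For any two distinct integers i, j in the set B = {a + 2^(2h) : 0 ≤ a ≤ 2^h - 1}, the 2-cyclotomic cosets of i and j modulo n are disjoint. -/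
private lemma tple {s t : ℕ} (hst : s ≤ t) : (2:ℕ)^s ≤ 2^t :=
  Nat.pow_le_pow_right (by norm_num) hst

private lemma key (h : ℕ) (hh : 1 ≤ h) (a b t : ℕ) (ha : a ≤ 2^h - 1) (hb : b ≤ 2^h - 1)
    (ht : t ≤ 4*h)
    (heq : (2^t * (a + 2^(2*h))) % (2^(4*h+1) - 1) = b + 2^(2*h)) : a = b := by
  obtain ⟨n, hn⟩ : ∃ n, n = 2^(4*h+1) - 1 := ⟨_, rfl⟩
  rw [← hn] at heq
  have h1 : (1:ℕ) ≤ 2^h := Nat.one_le_two_pow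
  have hE : (2:ℕ) ≤ 2^h := by simpa using tple hh
  have h2h : (2:ℕ)^h ≤ 2^(2*h) := tple (by omega)
  have hD : 2 * 2^h ≤ 2^(2*h) := by
    have hx : (2:ℕ)^(2*h) = 2^h * 2^h := by rw [← pow_add]; congr 1; omega
    rw [hx]; exact Nat.mul_le_mul hE le_rfl
  have h4h : (2:ℕ)^(2*h) ≤ 2^(4*h) := tple (by omega)
  have hn1 : (2:ℕ)^(4*h+1) = 2 * 2^(4*h) := by rw [pow_succ]; ring
  have hb5 : (2:ℕ)^(2*h+1) = 2 * 2^(2*h) := by rw [pow_succ]; ring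
  have h41 : (1:ℕ) ≤ 2^(4*h+1) := Nat.one_le_two_pow
  have hNn : (2:ℕ)^(4*h+1) = n + 1 := by omega
  have e : (2:ℕ)^t * (a + 2^(2*h)) = 2^t * a + 2^(t+2*h) := by
    rw [mul_add, ← pow_add]
  rcases Nat.eq_zero_or_pos t with rfl | htpos
  · have hlt : a + 2^(2*h) < n := by omega
    rw [pow_zero, one_mul, Nat.mod_eq_of_lt hlt] at heq
    omega
  exfalso
  rcases le_or_gt t (2*h) with hc | hc
  · -- 1 ≤ t ≤ 2h : no wrap
    have hta : 2^t * a + 2^t ≤ 2^(t+h) := by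
      have h' := Nat.mul_le_mul (le_refl ((2:ℕ)^t)) (show a+1 ≤ 2^h by omega)
      rw [mul_add, mul_one, ← pow_add] at h'
      exact h'
    have hb1 : (2:ℕ)^(t+h) ≤ 2^(3*h) := tple (by omega)
    have hb2 : (2:ℕ)^(t+2*h) ≤ 2^(4*h) := tple (by omega)
    have hb3 : (2:ℕ)^(3*h) ≤ 2^(4*h) := tple (by omega)
    have hb4 : (2:ℕ)^(2*h+1) ≤ 2^(t+2*h) := tple (by omega)
    have ht2 : (2:ℕ) ≤ 2^t := by simpa using tple htpos
    have hlt : 2^t * a + 2^(t+2*h) < n := by omega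
    rw [e, Nat.mod_eq_of_lt hlt] at heq
    omega
  rcases le_or_gt t (3*h) with hc3 | hc3
  · -- 2h < t ≤ 3h
    have hw : (2:ℕ)^(t+2*h) = 2^(t-2*h-1) * 2^(4*h+1) := by
      rw [← pow_add]; congr 1; omega
    have e2 : (2:ℕ)^t * (a + 2^(2*h)) =
        (2^t * a + 2^(t-2*h-1)) + 2^(t-2*h-1) * n := by
      rw [e, hw, hNn]; ring
    rw [e2, Nat.add_mul_mod_self_right] at heq
    have hta : 2^t * a + 2^t ≤ 2^(t+h) := by
      have h' := Nat.mul_le_mul (le_refl ((2:ℕ)^t)) (show a+1 ≤ 2^h by omega)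
      rw [mul_add, mul_one, ← pow_add] at h'
      exact h'
    have hb1 : (2:ℕ)^(t+h) ≤ 2^(4*h) := tple (by omega)
    have hb2 : (2:ℕ)^(t-2*h-1) ≤ 2^h := tple (by omega)
    have hb4 : (2:ℕ)^(2*h+1) ≤ 2^t := tple (by omega)
    have hta2 : 2^t ≤ 2^t * a ∨ a = 0 := by
      rcases Nat.eq_zero_or_pos a with rfl | hpa
      · right; rfl
      · left
        have h' := Nat.mul_le_mul (le_refl ((2:ℕ)^t)) hpa
        simpa using h'
    have hlt : 2^t * a + 2^(t-2*h-1) < n := by omega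
    rw [Nat.mod_eq_of_lt hlt] at heq
    clear e hw e2
    rcases hta2 with h' | rfl
    · have hcontr : (2:ℕ)^t ≤ b + 2^(2*h) :=
        le_trans h' (le_trans (Nat.le_add_right _ _) (le_of_eq heq))
      omega
    · simp only [Nat.mul_zero, Nat.zero_add] at heq
      omega
  · -- 3h < t ≤ 4h
    obtain ⟨q, c, hqc, hclt, hqlt⟩ :
        ∃ q c, a = 2^(4*h+1-t)*q + c ∧ c < 2^(4*h+1-t) ∧ q < 2^(t-3*h-1) := by
      refine ⟨a / 2^(4*h+1-t), a % 2^(4*h+1-t), (Nat.div_add_mod a _).symm,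
        Nat.mod_lt _ (Nat.two_pow_pos _), ?_⟩
      rw [Nat.div_lt_iff_lt_mul (Nat.two_pow_pos _), ← pow_add]
      calc a < 2^h := by omega
      _ ≤ 2^(t-3*h-1 + (4*h+1-t)) := tple (by omega)
    subst hqc
    have p1 : (2:ℕ)^t * 2^(4*h+1-t) = n + 1 := by
      rw [← pow_add, ← hNn]; congr 1; omega
    have p2 : (2:ℕ)^t * 2^(2*h) = 2^(t-2*h-1) * (n+1) := by
      rw [← pow_add, ← hNn, ← pow_add]; congr 1; omega
    have e3 : 2^t * (2^(4*h+1-t)*q + c + 2^(2*h)) =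
        (2^t*c + q + 2^(t-2*h-1)) + (q + 2^(t-2*h-1)) * n := by
      calc 2^t * (2^(4*h+1-t)*q + c + 2^(2*h))
          = (2^t * 2^(4*h+1-t))*q + 2^t*c + 2^t*2^(2*h) := by ring
      _ = _ := by rw [p1, p2]; ring
    rw [e3, Nat.add_mul_mod_self_right] at heq
    have hJ : 2^t*c + 2^t ≤ n + 1 := by
      have h' := Nat.mul_le_mul (le_refl ((2:ℕ)^t)) (show c+1 ≤ 2^(4*h+1-t) by omega)
      rw [mul_add, mul_one, p1] at h'
      omega
    have hI : (2:ℕ)^(t-3*h-1) ≤ 2^h := tple (by omega)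
    have hG : (2:ℕ)^(t-2*h-1) ≤ 2^(2*h-1) := tple (by omega)
    have hF : (2:ℕ)^(2*h) = 2 * 2^(2*h-1) := by
      have h2 : (2:ℕ)^(2*h-1+1) = 2^(2*h-1)*2 := pow_succ 2 _
      rw [show 2*h-1+1 = 2*h from by omega] at h2
      omega
    have hA : (2:ℕ)^(3*h+1) ≤ 2^t := tple (by omega)
    have hB : (2:ℕ)^(2*h+1) ≤ 2^(3*h+1) := tple (by omega)
    have hh2 : (2:ℕ)^h ≤ 2^(2*h-1) := tple (by omega)
    have hK : 2^t ≤ 2^t * c ∨ c = 0 := by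
      rcases Nat.eq_zero_or_pos c with rfl | hpc
      · right; rfl
      · left
        have h' := Nat.mul_le_mul (le_refl ((2:ℕ)^t)) hpc
        simpa using h'
    have hlt : 2^t*c + q + 2^(t-2*h-1) < n := by omega
    rw [Nat.mod_eq_of_lt hlt] at heq
    clear e p1 p2 e3
    rcases hK with h' | rfl
    · have hcontr : (2:ℕ)^t ≤ b + 2^(2*h) :=
        le_trans h' (le_trans (le_trans (Nat.le_add_right _ _) (Nat.le_add_right _ _))
          (le_of_eq heq))
      omega
    · simp only [Nat.mul_zero, Nat.zero_add] at heq
      omega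

private lemma key2 (h : ℕ) (hh : 1 ≤ h) (a b u v : ℕ) (ha : a ≤ 2^h-1) (hb : b ≤ 2^h-1)
    (hu : u ≤ 4*h) (hv : v ≤ 4*h) (hvu : v ≤ u)
    (hm : 2^u * (a + 2^(2*h)) ≡ 2^v * (b + 2^(2*h)) [MOD 2^(4*h+1)-1]) : a = b := by
  have h1 : (1:ℕ) ≤ 2^h := Nat.one_le_two_pow
  have hE : (2:ℕ) ≤ 2^h := by simpa using tple hh
  have h2h : (2:ℕ)^h ≤ 2^(2*h) := tple (by omega)
  have hD : 2 * 2^h ≤ 2^(2*h) := by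
    have hx : (2:ℕ)^(2*h) = 2^h * 2^h := by rw [← pow_add]; congr 1; omega
    rw [hx]; exact Nat.mul_le_mul hE le_rfl
  have h4h : (2:ℕ)^(2*h) ≤ 2^(4*h) := tple (by omega)
  have hn1 : (2:ℕ)^(4*h+1) = 2 * 2^(4*h) := by rw [pow_succ]; ring
  have hodd : Odd (2^(4*h+1) - 1) := ⟨2^(4*h) - 1, by omega⟩
  have hcop : Nat.Coprime (2^(4*h+1)-1) (2^v) :=
    ((Nat.coprime_two_left.mpr hodd).pow_left v).symm
  have hsplit : (2:ℕ)^u * (a + 2^(2*h)) = 2^v * (2^(u-v) * (a + 2^(2*h))) := by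
    rw [← mul_assoc, ← pow_add]; congr 2; omega
  rw [hsplit] at hm
  have hmm := Nat.ModEq.cancel_left_of_coprime hcop hm
  have hjlt : b + 2^(2*h) < 2^(4*h+1) - 1 := by omega
  have hx : (2^(u-v)*(a+2^(2*h))) % (2^(4*h+1)-1) = (b+2^(2*h)) % (2^(4*h+1)-1) := hmm
  rw [Nat.mod_eq_of_lt hjlt] at hx
  exact key h hh a b (u-v) ha hb (by omega) hx

theorem cosets_of_B_disjoint (h : ℕ) (hh : 1 ≤ h) (i j : ℕ)
    (hi : i ∈ Set.image (fun a => a + 2 ^ (2 * h)) {a | a ≤ 2 ^ h - 1})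
    (hj : j ∈ Set.image (fun a => a + 2 ^ (2 * h)) {a | a ≤ 2 ^ h - 1})
    (hij : i ≠ j) :
    Disjoint {x : ℕ | ∃ u : ℕ, x = (2 ^ u * i) % (2 ^ (4 * h + 1) - 1)}
      {x : ℕ | ∃ u : ℕ, x = (2 ^ u * j) % (2 ^ (4 * h + 1) - 1)} := by
  obtain ⟨a, ha, rfl⟩ := hi
  obtain ⟨b, hb, rfl⟩ := hj
  simp only [Set.mem_setOf_eq] at ha hb
  rw [Set.disjoint_left]
  rintro x ⟨u, hu⟩ ⟨v, hv⟩
  have h41 : (1:ℕ) ≤ 2^(4*h+1) := Nat.one_le_two_pow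
  have hone : (2:ℕ)^(4*h+1) ≡ 1 [MOD 2^(4*h+1) - 1] := by
    symm
    rw [Nat.modEq_iff_dvd' (by omega)]
  have hred : ∀ w : ℕ, (2:ℕ)^w ≡ 2^(w % (4*h+1)) [MOD 2^(4*h+1) - 1] := by
    intro w
    have hthis := (hone.pow (w/(4*h+1))).mul_right ((2:ℕ)^(w % (4*h+1)))
    rw [one_pow, one_mul] at hthis
    have hds : ((2:ℕ)^(4*h+1))^(w/(4*h+1)) * 2^(w%(4*h+1)) = 2^w := by
      rw [← pow_mul, ← pow_add, Nat.div_add_mod]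
    rw [hds] at hthis
    exact hthis
  have hbase : (2^u * (a + 2^(2*h))) % (2^(4*h+1)-1)
      = (2^v * (b + 2^(2*h))) % (2^(4*h+1)-1) := hu.symm.trans hv
  have hmeq : 2^(u % (4*h+1)) * (a + 2^(2*h)) ≡ 2^(v % (4*h+1)) * (b + 2^(2*h))
      [MOD 2^(4*h+1) - 1] :=
    ((hred u).symm.mul_right _).trans (Nat.ModEq.trans hbase ((hred v).mul_right _))
  have hum : u % (4*h+1) ≤ 4*h := by
    have := Nat.mod_lt u (show 0 < 4*h+1 by omega); omega
  have hvm : v % (4*h+1) ≤ 4*h := by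
    have := Nat.mod_lt v (show 0 < 4*h+1 by omega); omega
  have hab : a = b := by
    rcases le_total (v % (4*h+1)) (u % (4*h+1)) with hc | hc
    · exact key2 h hh a b _ _ ha hb hum hvm hc hmeq
    · exact (key2 h hh b a _ _ hb ha hvm hum hc hmeq.symm).symm
  exact hij (by rw [hab])
end

section
/- Let m = 4h + 1 with h ≥ 1 and n = 2^m - 1. Let i + 2^(2h) with 0 ≤ i ≤ 2^h - 1 and let j be odd with 1 ≤ j ≤ 2^h - 1. Then the 2-cyclotomic cosets of i + 2^(2h) and of j modulo n intersect if and only if (i, j) = (0, 1), in which case they coincide. -/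
/-!
Write `m = 4h + 1`. Modulo `2 ^ m - 1`, multiplication by `2` rotates `m`-bit strings, so the
two cosets meet iff `i + 2 ^ (2h) ≡ 2 ^ w * j` for some rotation `w < m`. If `w ≤ 3h` nothing
wraps around and this is an equality of integers, which forces `i = 0` and `j = 1`. If `w > 3h`,
rotating back by `m - w ≤ h` positions does not wrap either, so `j = 2 ^ (m - w) * (i + 2 ^ (2h))`
would be even.
-/

namespace Nat

def cyclotomicCoset (q n a : ℕ) : Set ℕ := {x | ∃ u, x = q ^ u * a % n}

section Rotation

variable {q m : ℕ}

theorem pow_modEq_one (hq : 0 < q) : q ^ m ≡ 1 [MOD q ^ m - 1] :=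
  modEq_sub (one_le_pow m q hq)

theorem pow_modEq_pow_mod (hq : 0 < q) (t : ℕ) : q ^ t ≡ q ^ (t % m) [MOD q ^ m - 1] :=
  calc q ^ t = (q ^ m) ^ (t / m) * q ^ (t % m) := by rw [← pow_mul, ← pow_add, div_add_mod]
    _ ≡ 1 ^ (t / m) * q ^ (t % m) [MOD q ^ m - 1] := ((pow_modEq_one hq).pow _).mul_right _
    _ = q ^ (t % m) := by rw [one_pow, one_mul]

theorem exists_lt_modEq_pow_mul_of_modEq (hq : 0 < q) (hm : 0 < m) {u v a b : ℕ}
    (h : q ^ u * a ≡ q ^ v * b [MOD q ^ m - 1]) : ∃ w < m, a ≡ q ^ w * b [MOD q ^ m - 1] := by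
  refine ⟨(u * (m - 1) + v) % m, mod_lt _ hm, ?_⟩
  calc a = 1 ^ u * a := by rw [one_pow, one_mul]
    _ ≡ (q ^ m) ^ u * a [MOD q ^ m - 1] := (((pow_modEq_one hq).pow u).mul_right a).symm
    _ = q ^ (u * (m - 1)) * (q ^ u * a) := by
      rw [← mul_assoc, ← pow_mul, ← pow_add, ← mul_add_one, Nat.sub_add_cancel hm,
        mul_comm m]
    _ ≡ q ^ (u * (m - 1)) * (q ^ v * b) [MOD q ^ m - 1] := h.mul_left _
    _ = q ^ (u * (m - 1) + v) * b := by rw [← mul_assoc, ← pow_add]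
    _ ≡ q ^ ((u * (m - 1) + v) % m) * b [MOD q ^ m - 1] := (pow_modEq_pow_mod hq _).mul_right b

theorem pow_sub_mul_modEq_of_modEq (hq : 0 < q) {w a b : ℕ} (hw : w ≤ m)
    (h : a ≡ q ^ w * b [MOD q ^ m - 1]) : q ^ (m - w) * a ≡ b [MOD q ^ m - 1] :=
  calc q ^ (m - w) * a ≡ q ^ (m - w) * (q ^ w * b) [MOD q ^ m - 1] := h.mul_left _
    _ = q ^ m * b := by rw [← mul_assoc, ← pow_add, Nat.sub_add_cancel hw]
    _ ≡ 1 * b [MOD q ^ m - 1] := (pow_modEq_one hq).mul_right b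
    _ = b := one_mul b

theorem cyclotomicCoset_pow_mul (hq : 0 < q) (hm : 0 < m) (k a : ℕ) :
    cyclotomicCoset q (q ^ m - 1) (q ^ k * a) = cyclotomicCoset q (q ^ m - 1) a := by
  ext x
  constructor
  · rintro ⟨u, rfl⟩
    exact ⟨u + k, by rw [pow_add, mul_assoc]⟩
  · rintro ⟨u, rfl⟩
    obtain ⟨w, -, hw⟩ := exists_lt_modEq_pow_mul_of_modEq hq hm
      (show q ^ k * a ≡ q ^ 0 * (q ^ k * a) [MOD q ^ m - 1] by rw [pow_zero, one_mul])
    exact ⟨u + w, by rw [pow_add, mul_assoc]; exact hw.mul_left _⟩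

end Rotation

end Nat

open Nat

theorem eq_zero_and_eq_one_of_two_pow_mul_eq {k l w i j : ℕ} (hl : 2 * k ≤ l) (hi : i < 2 ^ k)
    (hj : j < 2 ^ k) (hodd : Odd j) (h : 2 ^ w * j = i + 2 ^ l) : i = 0 ∧ j = 1 := by
  have hkw : k ≤ w := by
    by_contra! hwk
    have : 2 ^ w * j < 2 ^ l :=
      calc 2 ^ w * j < 2 ^ k * 2 ^ k := Nat.mul_lt_mul'' (pow_lt_pow_right₀ one_lt_two hwk) hj
        _ = 2 ^ (2 * k) := by rw [← pow_add, two_mul]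
        _ ≤ 2 ^ l := pow_le_pow_right₀ one_le_two hl
    omega
  have hdvd : 2 ^ k ∣ i + 2 ^ l := h ▸ (pow_dvd_pow 2 hkw).mul_right j
  obtain rfl : i = 0 :=
    eq_zero_of_dvd_of_lt ((Nat.dvd_add_left (pow_dvd_pow 2 (by omega))).mp hdvd) hi
  refine ⟨rfl, (Coprime.pow_right l (coprime_two_right.mpr hodd)).eq_one_of_dvd ?_⟩
  exact ⟨2 ^ w, by rw [← zero_add (2 ^ l), ← h, mul_comm]⟩

theorem eq_zero_and_eq_one_of_modEq_two_pow_mul {h w i j : ℕ} (hi : i < 2 ^ h) (hj : j < 2 ^ h)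
    (hodd : Odd j) (hw : w < 4 * h + 1)
    (hmod : i + 2 ^ (2 * h) ≡ 2 ^ w * j [MOD 2 ^ (4 * h + 1) - 1]) : i = 0 ∧ j = 1 := by
  have hh : 0 < h := Nat.pos_of_ne_zero <| by rintro rfl; have := hodd.pos; simp at hj; omega
  have hpow : ∀ {e f : ℕ}, e ≤ f → 2 ^ e ≤ 2 ^ f := pow_le_pow_right₀ one_le_two
  have hn : 2 ^ (4 * h) < 2 ^ (4 * h + 1) - 1 := by
    have := hpow (show 1 ≤ 4 * h by omega); rw [pow_succ]; omega
  have ha : i + 2 ^ (2 * h) < 2 ^ (2 * h + 1) := by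
    have := hpow (show h ≤ 2 * h by omega); rw [pow_succ]; omega
  rcases le_or_gt w (3 * h) with hw3 | hw3
  · have hb : 2 ^ w * j < 2 ^ (4 * h) :=
      calc 2 ^ w * j < 2 ^ (3 * h) * 2 ^ h :=
            Nat.mul_lt_mul_of_le_of_lt (hpow hw3) hj (by positivity)
        _ = 2 ^ (4 * h) := by rw [← pow_add]; ring_nf
    have ha' : i + 2 ^ (2 * h) < 2 ^ (4 * h) := ha.trans_le (hpow (by omega))
    exact eq_zero_and_eq_one_of_two_pow_mul_eq le_rfl hi hj hodd
      (hmod.eq_of_lt_of_lt (by omega) (by omega)).symm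
  · have hb : 2 ^ (4 * h + 1 - w) * (i + 2 ^ (2 * h)) < 2 ^ (4 * h) :=
      calc 2 ^ (4 * h + 1 - w) * (i + 2 ^ (2 * h)) < 2 ^ h * 2 ^ (2 * h + 1) :=
            Nat.mul_lt_mul_of_le_of_lt (hpow (by omega)) ha (by positivity)
        _ ≤ 2 ^ (4 * h) := by rw [← pow_add]; exact hpow (by omega)
    have hj' : j < 2 ^ (4 * h) := hj.trans_le (hpow (by omega))
    have heq := (pow_sub_mul_modEq_of_modEq two_pos hw.le hmod).eq_of_lt_of_lt (by omega) (by omega)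
    have heven : Even j := heq ▸ (Nat.even_pow.mpr ⟨even_two, by omega⟩).mul_right _
    exact absurd hodd (not_odd_iff_even.mpr heven)

theorem coset_B_meets_coset_odd_iff_general (h : ℕ) (i j : ℕ)
    (hi : i ≤ 2 ^ h - 1) (hjodd : Odd j) (hj2 : j ≤ 2 ^ h - 1) :
    ((∃ x : ℕ, (∃ u : ℕ, x = (2 ^ u * (i + 2 ^ (2 * h))) % (2 ^ (4 * h + 1) - 1)) ∧
        (∃ u : ℕ, x = (2 ^ u * j) % (2 ^ (4 * h + 1) - 1))) ↔ (i = 0 ∧ j = 1)) ∧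
    (i = 0 ∧ j = 1 →
      {x : ℕ | ∃ u : ℕ, x = (2 ^ u * (i + 2 ^ (2 * h))) % (2 ^ (4 * h + 1) - 1)} =
      {x : ℕ | ∃ u : ℕ, x = (2 ^ u * j) % (2 ^ (4 * h + 1) - 1)}) := by
  have hcoset : i = 0 ∧ j = 1 →
      cyclotomicCoset 2 (2 ^ (4 * h + 1) - 1) (i + 2 ^ (2 * h)) =
        cyclotomicCoset 2 (2 ^ (4 * h + 1) - 1) j := by
    rintro ⟨rfl, rfl⟩
    simpa using cyclotomicCoset_pow_mul two_pos (succ_pos _) (2 * h) 1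
  refine ⟨⟨?_, fun hij => ⟨_, ⟨0, rfl⟩, (hcoset hij).subset ⟨0, rfl⟩⟩⟩, hcoset⟩
  rintro ⟨x, ⟨u, rfl⟩, ⟨v, hv⟩⟩
  have hpos := Nat.one_le_two_pow (n := h)
  obtain ⟨w, hw, hmod⟩ := exists_lt_modEq_pow_mul_of_modEq two_pos (succ_pos _) hv
  exact eq_zero_and_eq_one_of_modEq_two_pow_mul (by omega) (by omega) hjodd hw hmod

theorem coset_B_meets_coset_odd_iff (h : ℕ) (hh : 1 ≤ h) (i j : ℕ)
    (hi : i ≤ 2 ^ h - 1) (hjodd : Odd j) (hj1 : 1 ≤ j) (hj2 : j ≤ 2 ^ h - 1) :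
    ((∃ x : ℕ, (∃ u : ℕ, x = (2 ^ u * (i + 2 ^ (2 * h))) % (2 ^ (4 * h + 1) - 1)) ∧
        (∃ u : ℕ, x = (2 ^ u * j) % (2 ^ (4 * h + 1) - 1))) ↔ (i = 0 ∧ j = 1)) ∧
    (i = 0 ∧ j = 1 →
      {x : ℕ | ∃ u : ℕ, x = (2 ^ u * (i + 2 ^ (2 * h))) % (2 ^ (4 * h + 1) - 1)} =
      {x : ℕ | ∃ u : ℕ, x = (2 ^ u * j) % (2 ^ (4 * h + 1) - 1)}) :=
  coset_B_meets_coset_odd_iff_general h i j hi hjodd hj2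
end

section
/- Let m = 2t + 1 with t ≥ 1. The map x ↦ x^(2^t + 3) is a bijection (permutation) of GF(2^m). -/
lemma aux_coprime (t : ℕ) : Nat.Coprime (2 ^ (2 * t + 1) - 1) (2 ^ t + 3) := by
  set d := Nat.gcd (2 ^ (2 * t + 1) - 1) (2 ^ t + 3) with hd
  have h1 : (d : ℤ) ∣ (2 ^ (2 * t + 1) - 1 : ℤ) := by
    have := Nat.gcd_dvd_left (2 ^ (2 * t + 1) - 1) (2 ^ t + 3)
    have h2 : (1:ℕ) ≤ 2 ^ (2 * t + 1) := Nat.one_le_two_pow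
    have := Int.natCast_dvd_natCast.mpr this
    push_cast [h2] at this
    exact this
  have h2 : (d : ℤ) ∣ (2 ^ t + 3 : ℤ) := by
    have := Nat.gcd_dvd_right (2 ^ (2 * t + 1) - 1) (2 ^ t + 3)
    exact_mod_cast Int.natCast_dvd_natCast.mpr this
  have h17 : (d : ℤ) ∣ 17 := by
    have key : (17 : ℤ) = (2 ^ (2 * t + 1) - 1) - 2 * (2 ^ t + 3) * (2 ^ t - 3) := by
      have h2t : (2:ℤ) ^ (2 * t + 1) = 2 * (2 ^ t) ^ 2 := by
        rw [pow_succ, two_mul, pow_add]; ring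
      rw [h2t]; ring
    rw [key]
    exact dvd_sub h1 ((h2.mul_left 2).mul_right _)
  have h17n : d ∣ 17 := by exact_mod_cast h17
  have hne : d ≠ 17 := by
    intro h
    have hdvd : (17 : ℕ) ∣ 2 ^ t + 3 := h ▸ Nat.gcd_dvd_right _ _
    have hz : ((2 ^ t + 3 : ℕ) : ZMod 17) = 0 := (ZMod.natCast_eq_zero_iff _ _).mpr hdvd
    push_cast at hz
    have hsplit : (2 : ZMod 17) ^ t = 2 ^ (t % 8) := by
      conv_lhs => rw [← Nat.div_add_mod t 8]
      rw [pow_add, pow_mul]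
      have h8 : (2 : ZMod 17) ^ 8 = 1 := by decide
      rw [h8, one_pow, one_mul]
    rw [hsplit] at hz
    have hlt : t % 8 < 8 := Nat.mod_lt t (by norm_num)
    interval_cases h : t % 8 <;> simp_all <;> revert hz <;> decide
  have : d = 1 ∨ d = 17 := (Nat.dvd_prime (by norm_num)).mp h17n
  exact this.resolve_right hne

theorem pow_two_pow_add_three_bijective {F : Type*} [Field F] [Fintype F]
    (t : ℕ) (ht : 1 ≤ t) (hcard : Fintype.card F = 2 ^ (2 * t + 1)) :
    Function.Bijective (fun x : F => x ^ (2 ^ t + 3)) := by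
  have hcop : (Nat.card Fˣ).Coprime (2 ^ t + 3) := by
    rw [Nat.card_units, Nat.card_eq_fintype_card, hcard]
    exact aux_coprime t
  have hbij := Nat.Coprime.pow_left_bijective hcop
  rw [← Finite.injective_iff_bijective]
  intro x y h
  simp only at h
  by_cases hx : x = 0
  · subst hx
    have : y ^ (2 ^ t + 3) = 0 := by rw [← h]; simp
    exact (pow_eq_zero_iff (by norm_num)).mp this |>.symm
  · by_cases hy : y = 0
    · subst hy
      simp at h
      exact absurd h hx
    · have hu : (Units.mk0 x hx) ^ (2 ^ t + 3) = (Units.mk0 y hy) ^ (2 ^ t + 3) := by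
        ext; push_cast; exact h
      have := hbij.injective hu
      have := congrArg Units.val this
      simpa using this
end

section
/- Let m ≡ 1 (mod 4), m ≥ 5, and e = 2^((m-1)/2) + 2^((m-1)/4) - 1. Then gcd(e, 2^m - 1) = 1, so x ↦ x^e is a permutation of GF(2^m). -/
theorem gcd_key (k : ℕ) (hk : 1 ≤ k) :
    Nat.gcd (2 ^ (2*k) + 2 ^ k - 1) (2 ^ (4*k+1) - 1) = 1 := by
  set e : ℕ := 2 ^ (2*k) + 2 ^ k - 1 with he
  set N : ℕ := 2 ^ (4*k+1) - 1 with hN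
  set t : ℤ := 2 ^ k with ht
  have h1 : (1:ℕ) ≤ 2 ^ (2*k) + 2 ^ k := le_trans Nat.one_le_two_pow (Nat.le_add_right _ _)
  have h2 : (1:ℕ) ≤ 2 ^ (4*k+1) := Nat.one_le_two_pow
  have hecast : (e : ℤ) = t^2 + t - 1 := by
    push_cast [he, h1]
    rw [ht, ← pow_mul]; ring
  have hNcast : (N : ℤ) = 2 * t^4 - 1 := by
    push_cast [hN, h2]
    rw [ht, ← pow_mul]; ring
  set d : ℕ := Nat.gcd e N with hd
  have hde : (d : ℤ) ∣ (e : ℤ) := Int.natCast_dvd_natCast.mpr (Nat.gcd_dvd_left _ _)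
  have hdN : (d : ℤ) ∣ (N : ℤ) := Int.natCast_dvd_natCast.mpr (Nat.gcd_dvd_right _ _)
  have key : (N : ℤ) = (e : ℤ) * (2*t^2 - 2*t + 4) - 3 * (2*t - 1) := by
    rw [hecast, hNcast]; ring
  have hd3 : (d : ℤ) ∣ 3 * (2*t - 1) := by
    have h := dvd_sub (hde.mul_right (2*t^2 - 2*t + 4)) hdN
    rw [key] at h
    simpa using h
  have hcop : IsCoprime (d : ℤ) (2*t - 1) := by
    obtain ⟨c, hc⟩ := hde
    exact ⟨-4*c, 2*t+3, by linear_combination 4*hc - 4*hecast⟩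
  have hdvd3 : (d : ℤ) ∣ 3 := hcop.dvd_of_dvd_mul_right hd3
  have hd3n : d ∣ 3 := by exact_mod_cast hdvd3
  -- 3 does not divide N since 2^(odd) ≡ 2 mod 3
  have h3N : ¬ (3 ∣ N) := by
    have : N % 3 = 1 := by
      have h4 : 2 ^ (4*k) % 3 = 1 := by
        rw [show 4*k = 2*(2*k) by ring, pow_mul, Nat.pow_mod]; simp [Nat.one_pow]
      have : 2 ^ (4*k+1) % 3 = 2 := by
        rw [pow_succ, Nat.mul_mod, h4]
      omega
    omega
  have hdN' : d ∣ N := Nat.gcd_dvd_right e N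
  rcases (Nat.prime_three).eq_one_or_self_of_dvd d hd3n with h | h
  · exact h
  · rw [h] at hdN'; exact absurd hdN' h3N

theorem pow_bij_of_coprime {F : Type*} [Field F] [Fintype F] (n : ℕ) (hn : 0 < n)
    (h : Nat.Coprime (Nat.card Fˣ) n) :
    Function.Bijective (fun x : F => x ^ n) := by
  rw [Finite.injective_iff_bijective.symm]
  intro a b hab
  simp only at hab
  rcases eq_or_ne a 0 with rfl | ha
  · rcases eq_or_ne b 0 with rfl | hb
    · rfl
    · exfalso
      apply hb
      have : b ^ n = 0 := by rw [← hab, zero_pow hn.ne']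
      exact pow_eq_zero_iff hn.ne' |>.mp this
  · rcases eq_or_ne b 0 with rfl | hb
    · exfalso
      apply ha
      have : a ^ n = 0 := by rw [hab, zero_pow hn.ne']
      exact pow_eq_zero_iff hn.ne' |>.mp this
    · have hu : (Units.mk0 a ha) ^ n = (Units.mk0 b hb) ^ n := by
        ext; simpa using hab
      have := (powCoprime h).injective hu
      simpa [Units.ext_iff] using this

theorem niho_exponent_bijective {F : Type*} [Field F] [Fintype F]
    (m : ℕ) (hm : 5 ≤ m) (hmod : m % 4 = 1)
    (hcard : Fintype.card F = 2 ^ m) :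
    Nat.gcd (2 ^ ((m - 1) / 2) + 2 ^ ((m - 1) / 4) - 1) (2 ^ m - 1) = 1 ∧
    Function.Bijective
      (fun x : F => x ^ (2 ^ ((m - 1) / 2) + 2 ^ ((m - 1) / 4) - 1)) := by
  set k := (m - 1) / 4 with hk
  have hm4 : m = 4 * k + 1 := by omega
  have h2 : (m - 1) / 2 = 2 * k := by omega
  have hgcd : Nat.gcd (2 ^ ((m - 1) / 2) + 2 ^ ((m - 1) / 4) - 1) (2 ^ m - 1) = 1 := by
    rw [h2, ← hk, hm4]
    exact gcd_key k (by omega)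
  refine ⟨hgcd, ?_⟩
  have hcardU : Nat.card Fˣ = 2 ^ m - 1 := by
    rw [Nat.card_units, Nat.card_eq_fintype_card, hcard]
  apply pow_bij_of_coprime
  · have hA : 2 ≤ 2 ^ ((m-1)/2) := by
      calc 2 = 2^1 := rfl
        _ ≤ 2 ^ ((m-1)/2) := Nat.pow_le_pow_right (by norm_num) (by omega)
    have hB : 1 ≤ 2 ^ k := Nat.one_le_two_pow
    omega
  · rw [hcardU, Nat.Coprime, Nat.gcd_comm]
    exact hgcd
end

section
/- Let m ≥ 4 and h be an integer satisfying 1 ≤ h ≤ (m-1)/4 if m ≡ 1 (mod 4), 1 ≤ h ≤ (m-3)/4 if m ≡ 3 (mod 4), 1 ≤ h ≤ (m-4)/4 if m ≡ 0 (mod 4), and 1 ≤ h ≤ (m-2)/4 if m ≡ 2 (mod 4). Then for every j of the form j = i + 2^(m-h) with 0 ≤ i ≤ 2^h - 1, the 2-cyclotomic coset of j modulo n = 2^m - 1 has size exactly m. -/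
theorem coset_size_full_kasami (m h : ℕ) (hm : 4 ≤ m) (hh : 1 ≤ h)
    (h1 : m % 4 = 1 → h ≤ (m - 1) / 4)
    (h3 : m % 4 = 3 → h ≤ (m - 3) / 4)
    (h0 : m % 4 = 0 → h ≤ (m - 4) / 4)
    (h2 : m % 4 = 2 → h ≤ (m - 2) / 4)
    (i : ℕ) (hi : i ≤ 2 ^ h - 1) :
    sInf {ℓ : ℕ | 0 < ℓ ∧
        2 ^ ℓ * (i + 2 ^ (m - h)) ≡ i + 2 ^ (m - h) [MOD 2 ^ m - 1]} = m := by
  have h4 : 4 * h < m := by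
    rcases (show m % 4 = 0 ∨ m % 4 = 1 ∨ m % 4 = 2 ∨ m % 4 = 3 by omega) with h'|h'|h'|h'
    · have := h0 h'; omega
    · have := h1 h'; omega
    · have := h2 h'; omega
    · have := h3 h'; omega
  have pow_mono : ∀ a b : ℕ, a ≤ b → (2:ℕ)^a ≤ 2^b :=
    fun a b hab => Nat.pow_le_pow_right (by norm_num) hab
  have pow_strict : ∀ a b : ℕ, a < b → (2:ℕ)^a < 2^b :=
    fun a b hab => Nat.pow_lt_pow_right (by norm_num) hab
  have pow_pos : ∀ a : ℕ, (1:ℕ) ≤ 2^a := fun a => Nat.one_le_two_pow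
  have pow_split : ∀ a b : ℕ, b ≤ a → (2:ℕ)^a = 2^b * 2^(a-b) := by
    intro a b hba; rw [← pow_add, Nat.add_sub_cancel' hba]
  have hi' : i < 2^h := by have := pow_pos h; omega
  have hjn : i + 2^(m-h) < 2^m - 1 := by
    have e1 : (2:ℕ)^h ≤ 2^(m-h-1) := pow_mono _ _ (by omega)
    have e2 : (2:ℕ)^(m-h) = 2^(m-h-1) * 2 := by
      rw [← pow_succ, Nat.sub_add_cancel (by omega : 1 ≤ m - h)]
    have e3 : (2:ℕ)^(m-h) ≤ 2^(m-1) := pow_mono _ _ (by omega)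
    have e4 : (2:ℕ)^m = 2^(m-1) * 2 := by
      rw [← pow_succ, Nat.sub_add_cancel (by omega : 1 ≤ m)]
    have := pow_pos (m-h-1)
    omega
  have hpow1 : (2:ℕ)^m ≡ 1 [MOD 2^m - 1] :=
    ((Nat.modEq_iff_dvd' (pow_pos m)).mpr dvd_rfl).symm
  have eqOfModEq : ∀ a b : ℕ, a ≡ b [MOD 2^m - 1] → a < 2^m - 1 → b < 2^m - 1 → a = b := by
    intro a b hab ha hb
    rwa [Nat.ModEq, Nat.mod_eq_of_lt ha, Nat.mod_eq_of_lt hb] at hab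
  -- the key: no 0 < ℓ < m works
  have hlow : ∀ ℓ, 0 < ℓ → ℓ < m →
      ¬ (2^ℓ * (i + 2^(m-h)) ≡ i + 2^(m-h) [MOD 2^m - 1]) := by
    intro ℓ hℓ0 hℓm hc
    rcases (show ℓ < h ∨ (h ≤ ℓ ∧ ℓ ≤ m - h) ∨ m - h < ℓ by omega) with hA | ⟨hB1, hB2⟩ | hC
    · -- Case A : ℓ < h, so 2^ℓ*j is itself < n and > j
      have E : 2^ℓ * (i + 2^(m-h)) = 2^ℓ * i + 2^(m-h+ℓ) := by
        rw [mul_add, ← pow_add, Nat.add_comm ℓ (m-h)]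
      have b1 : 2^ℓ * i + 2^ℓ ≤ 2^(ℓ+h) := by
        calc 2^ℓ * i + 2^ℓ = 2^ℓ * (i+1) := by ring
        _ ≤ 2^ℓ * 2^h := Nat.mul_le_mul_left _ (by omega)
        _ = 2^(ℓ+h) := (pow_add 2 ℓ h).symm
      have b1' : (1:ℕ) ≤ 2^ℓ := pow_pos ℓ
      have b2 : (2:ℕ)^(ℓ+h) ≤ 2^(m-2) := pow_mono _ _ (by omega)
      have b3 : (2:ℕ)^(m-h+ℓ) ≤ 2^(m-1) := pow_mono _ _ (by omega)
      have b4 : (2:ℕ)^(m-h+1) ≤ 2^(m-h+ℓ) := pow_mono _ _ (by omega)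
      have b5 : (2:ℕ)^(m-h+1) = 2^(m-h) * 2 := pow_succ 2 (m-h)
      have b6 : (2:ℕ)^h ≤ 2^(m-h) := pow_mono _ _ (by omega)
      have b7 : (2:ℕ)^m = 4 * 2^(m-2) := by
        rw [pow_split m 2 (by omega)]; norm_num
      have b8 : (2:ℕ)^(m-1) = 2^(m-2) * 2 := by
        rw [← pow_succ, show m - 2 + 1 = m - 1 by omega]
      have hlt : 2^ℓ * (i + 2^(m-h)) < 2^m - 1 := by have := pow_pos (m-2); omega
      have heq := eqOfModEq _ _ hc hlt hjn
      have := pow_pos (m-2)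
      omega
    · -- Case B : h ≤ ℓ ≤ m - h
      have E : 2^ℓ * (i + 2^(m-h)) = 2^ℓ * i + 2^(ℓ-h) * 2^m := by
        rw [mul_add, ← pow_add, ← pow_add, show ℓ + (m-h) = (ℓ-h) + m by omega]
      have hmr : 2^ℓ * (i + 2^(m-h)) ≡ 2^ℓ * i + 2^(ℓ-h) [MOD 2^m - 1] := by
        rw [E]
        have : 2^(ℓ-h) * 2^m ≡ 2^(ℓ-h) * 1 [MOD 2^m - 1] := Nat.ModEq.mul_left _ hpow1
        simpa using Nat.ModEq.add_left (2^ℓ * i) this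
      have b1 : 2^ℓ * i + 2^ℓ ≤ 2^(ℓ+h) := by
        calc 2^ℓ * i + 2^ℓ = 2^ℓ * (i+1) := by ring
        _ ≤ 2^ℓ * 2^h := Nat.mul_le_mul_left _ (by omega)
        _ = 2^(ℓ+h) := (pow_add 2 ℓ h).symm
      have hrn : 2^ℓ * i + 2^(ℓ-h) < 2^m - 1 := by
        rcases (show ℓ + h = m ∨ ℓ + h ≤ m - 1 by omega) with hE | hE
        · -- ℓ = m - h exactly
          have b3 : (2:ℕ)^(ℓ-h) ≤ 2^(m-h-1) := pow_mono _ _ (by omega)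
          have b4 : (2:ℕ)^ℓ = 2^(m-h-1) * 2 := by
            rw [← pow_succ, show m - h - 1 + 1 = ℓ by omega]
          have b5 : (2:ℕ)^(ℓ+h) = 2^m := by rw [hE]
          have b6 : (2:ℕ)^1 ≤ 2^(m-h-1) := pow_mono _ _ (by omega)
          have b7 : (2:ℕ)^1 = 2 := pow_one 2
          omega
        · have b3 : (2:ℕ)^(ℓ-h) < 2^ℓ := pow_strict _ _ (by omega)
          have b4 : (2:ℕ)^(ℓ+h) ≤ 2^(m-1) := pow_mono _ _ hE
          have b5 : (2:ℕ)^m = 2^(m-1) * 2 := by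
            rw [← pow_succ, Nat.sub_add_cancel (by omega : 1 ≤ m)]
          have b6 : (2:ℕ)^1 ≤ 2^(m-1) := pow_mono _ _ (by omega)
          have b7 : (2:ℕ)^1 = 2 := pow_one 2
          omega
      have hrj : 2^ℓ * i + 2^(ℓ-h) = i + 2^(m-h) :=
        eqOfModEq _ _ (hmr.symm.trans hc) hrn hjn
      -- take the equation mod 2^ℓ : get i = 2^(ℓ-h)
      have lhs : (2^ℓ * i + 2^(ℓ-h)) % 2^ℓ = 2^(ℓ-h) := by
        rw [Nat.mul_add_mod]
        exact Nat.mod_eq_of_lt (pow_strict _ _ (by omega))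
      have rhs : (i + 2^(m-h)) % 2^ℓ = i := by
        rw [pow_split (m-h) ℓ (by omega), Nat.add_mul_mod_self_left]
        exact Nat.mod_eq_of_lt (lt_of_lt_of_le hi' (pow_mono _ _ hB1))
      have hmod : (2:ℕ)^(ℓ-h) = i := by rw [← lhs, hrj, rhs]
      have hℓ2h : ℓ < 2*h := by
        by_contra hcon
        have : (2:ℕ)^h ≤ 2^(ℓ-h) := pow_mono _ _ (by omega)
        omega
      have E2 : (2:ℕ)^ℓ * 2^(ℓ-h) = 2^(ℓ+(ℓ-h)) := (pow_add 2 ℓ (ℓ-h)).symm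
      have E3 : (2:ℕ)^(ℓ+(ℓ-h)) < 2^(m-h) := pow_strict _ _ (by omega)
      rw [← hmod] at hrj
      omega
    · -- Case C : m - h < ℓ < m
      obtain ⟨q, s0, e0, hs0⟩ : ∃ q s0, i = 2^(m-ℓ) * q + s0 ∧ s0 < 2^(m-ℓ) :=
        ⟨i / 2^(m-ℓ), i % 2^(m-ℓ), (Nat.div_add_mod i (2^(m-ℓ))).symm,
          Nat.mod_lt _ (by positivity)⟩
      subst e0
      have hq : q < 2^(h-(m-ℓ)) := by
        by_contra hcon
        push_neg at hcon
        have h5 : (2:ℕ)^(m-ℓ) * 2^(h-(m-ℓ)) ≤ 2^(m-ℓ) * q := Nat.mul_le_mul_left _ hcon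
        rw [← pow_add, show (m-ℓ) + (h-(m-ℓ)) = h by omega] at h5
        omega
      have E : 2^ℓ * (2^(m-ℓ) * q + s0 + 2^(m-h)) = 2^m * q + 2^ℓ * s0 + 2^(ℓ-h) * 2^m := by
        rw [mul_add, mul_add, ← mul_assoc, ← pow_add, show ℓ + (m-ℓ) = m by omega,
          ← pow_add, show ℓ + (m-h) = (ℓ-h) + m by omega, pow_add]
      have hmr : 2^ℓ * (2^(m-ℓ) * q + s0 + 2^(m-h)) ≡ q + 2^ℓ * s0 + 2^(ℓ-h)
          [MOD 2^m - 1] := by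
        rw [E]
        have c1 : 2^m * q + 2^ℓ * s0 ≡ 1 * q + 2^ℓ * s0 [MOD 2^m - 1] :=
          Nat.ModEq.add_right _ (hpow1.mul_right q)
        have c2 : 2^(ℓ-h) * 2^m ≡ 2^(ℓ-h) * 1 [MOD 2^m - 1] := Nat.ModEq.mul_left _ hpow1
        simpa using c1.add c2
      have hb1 : 2^ℓ * s0 + 2^ℓ ≤ 2^m := by
        calc 2^ℓ * s0 + 2^ℓ = 2^ℓ * (s0+1) := by ring
        _ ≤ 2^ℓ * 2^(m-ℓ) := Nat.mul_le_mul_left _ (by omega)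
        _ = 2^m := by rw [← pow_add, Nat.add_sub_cancel' (by omega : ℓ ≤ m)]
      have hrn : q + 2^ℓ * s0 + 2^(ℓ-h) < 2^m - 1 := by
        have b1 : (2:ℕ)^(h-(m-ℓ)) ≤ 2^(ℓ-2) := pow_mono _ _ (by omega)
        have b2 : (2:ℕ)^(ℓ-h) ≤ 2^(ℓ-1) := pow_mono _ _ (by omega)
        have b3 : (2:ℕ)^ℓ = 4 * 2^(ℓ-2) := by
          rw [pow_split ℓ 2 (by omega)]; norm_num
        have b4 : (2:ℕ)^(ℓ-1) = 2^(ℓ-2) * 2 := by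
          rw [← pow_succ, show ℓ - 2 + 1 = ℓ - 1 by omega]
        have := pow_pos (ℓ-2)
        omega
      have hrj : q + 2^ℓ * s0 + 2^(ℓ-h) = 2^(m-ℓ) * q + s0 + 2^(m-h) :=
        eqOfModEq _ _ (hmr.symm.trans hc) hrn hjn
      rcases Nat.eq_zero_or_pos s0 with hz | hpos
      · subst hz
        have b1 : q ≤ 2^(m-ℓ) * q := Nat.le_mul_of_pos_left q (by positivity)
        have b2 : (2:ℕ)^(ℓ-h) < 2^(m-h) := pow_strict _ _ (by omega)
        omega
      · have b1 : 2^ℓ ≤ 2^ℓ * s0 := Nat.le_mul_of_pos_right _ hpos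
        have b2 : (2:ℕ)^(m-h+1) ≤ 2^ℓ := pow_mono _ _ (by omega)
        have b3 : (2:ℕ)^(m-h+1) = 2^(m-h) * 2 := pow_succ 2 (m-h)
        have b4 : (2:ℕ)^h ≤ 2^(m-h) := pow_mono _ _ (by omega)
        have k1 : 2^(m-ℓ)*q + s0 + 2^(m-h) < 2^ℓ := by omega
        have c2 : (2:ℕ)^ℓ ≤ q + 2^ℓ*s0 + 2^(ℓ-h) :=
          le_trans b1 (le_trans (Nat.le_add_left _ q) (Nat.le_add_right _ _))
        rw [hrj] at c2
        exact absurd (lt_of_lt_of_le k1 c2) (lt_irrefl _)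
  have hmemS : m ∈ {ℓ : ℕ | 0 < ℓ ∧
      2 ^ ℓ * (i + 2 ^ (m - h)) ≡ i + 2 ^ (m - h) [MOD 2 ^ m - 1]} :=
    ⟨by omega, by simpa using hpow1.mul_right (i + 2^(m-h))⟩
  have hinf := Nat.sInf_mem (⟨m, hmemS⟩ : Set.Nonempty _)
  have hle := Nat.sInf_le hmemS
  simp only [Set.mem_setOf_eq] at hinf
  obtain ⟨hp, hcg⟩ := hinf
  rcases lt_or_eq_of_le hle with hlt | heq
  · exact absurd hcg (hlow _ hp hlt)
  · exact heq
end
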